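/- arXiv:2406.03355 — 8 statements merged into one kernel-verified Lean document; each statement's English description precedes it below -/
import Mathlib

section
/- If G is a graph on n vertices, then the number of independent sets in G plus the number of independent sets in the complement of G is at most 2^n + n + 1. -/
open SimpleGraph Finset

/-- Number of cliques (complete vertex subsets, including the empty set) of `G`. -/
noncomputable def cliqueCount {V : Type*} (G : SimpleGraph V) : ℕ :=
  Nat.card {s : Finset V // G.IsClique (s : Set V)}

/-- Number of independent sets of `G` (cliques of the complement). -/
noncomputable def indepCount {V : Type*} (G : SimpleGraph V) : ℕ :=
  cliqueCount Gᶜ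

theorem indep_add_indep_compl_le {V : Type*} [Fintype V] (G : SimpleGraph V) (n : ℕ)
    (hn : Fintype.card V = n) :
    indepCount G + indepCount Gᶜ ≤ 2 ^ n + n + 1 := by
  classical
  subst hn
  have key : ∀ (H : SimpleGraph V),
      cliqueCount H = Set.ncard {s : Finset V | H.IsClique (s : Set V)} := fun H =>
    (Nat.card_coe_set_eq _).symm
  rw [indepCount, indepCount, compl_compl, key, key]
  set A : Set (Finset V) := {s : Finset V | Gᶜ.IsClique (s : Set V)} with hA
  set B : Set (Finset V) := {s : Finset V | G.IsClique (s : Set V)} with hB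
  have hcard : (A ∪ B).ncard + (A ∩ B).ncard = A.ncard + B.ncard :=
    Set.ncard_union_add_ncard_inter A B A.toFinite B.toFinite
  have h1 : (A ∪ B).ncard ≤ 2 ^ Fintype.card V := by
    calc (A ∪ B).ncard ≤ (Set.univ : Set (Finset V)).ncard :=
          Set.ncard_le_ncard (Set.subset_univ _) Set.finite_univ
    _ = 2 ^ Fintype.card V := by
        rw [Set.ncard_univ, Nat.card_eq_fintype_card, Fintype.card_finset]
  have h2 : (A ∩ B).ncard ≤ Fintype.card V + 1 := by
    have hsub : A ∩ B ⊆ insert ∅ (Set.range (fun v : V => ({v} : Finset V))) := by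
      intro s hs
      obtain ⟨hsA, hsB⟩ := hs
      have hle : s.card ≤ 1 := by
        rw [Finset.card_le_one]
        intro a ha b hb
        by_contra hab
        have hadj : G.Adj a b := hsB (by simpa using ha) (by simpa using hb) hab
        have hadj' : Gᶜ.Adj a b := hsA (by simpa using ha) (by simpa using hb) hab
        exact hadj'.2 hadj
      interval_cases h : s.card
      · simp [Finset.card_eq_zero.mp h]
      · obtain ⟨v, hv⟩ := Finset.card_eq_one.mp h
        exact Set.mem_insert_iff.mpr (Or.inr ⟨v, hv.symm⟩)
    calc (A ∩ B).ncard
        ≤ (insert ∅ (Set.range (fun v : V => ({v} : Finset V)))).ncard :=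
          Set.ncard_le_ncard hsub ((Set.finite_range _).insert _)
      _ ≤ (Set.range (fun v : V => ({v} : Finset V))).ncard + 1 :=
          Set.ncard_insert_le _ _
      _ ≤ Fintype.card V + 1 := by
          have : (Set.range (fun v : V => ({v} : Finset V))).ncard ≤
              (Set.univ : Set V).ncard := by
            rw [← Set.image_univ]
            exact Set.ncard_image_le Set.finite_univ
          rw [Set.ncard_univ, Nat.card_eq_fintype_card] at this
          omega
  omega
end

section
/- If G is a graph on n vertices, then i(G) + i(complement of G) = 2^n + n + 1 if and only if G is the complete graph K_n or the empty graph E_n. -/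
open SimpleGraph Finset

lemma cliqueCount_eq_card_filter {V : Type*} [Fintype V] (G : SimpleGraph V)
    [DecidablePred fun s : Finset V => G.IsClique (s : Set V)] :
    cliqueCount G = (univ.filter fun s : Finset V => G.IsClique (s : Set V)).card := by
  rw [cliqueCount, Nat.card_eq_fintype_card, Fintype.card_subtype]

lemma card_filter_card_le_one {V : Type*} [Fintype V] [DecidableEq V] :
    (univ.filter fun s : Finset V => s.card ≤ 1).card = Fintype.card V + 1 := by
  have h : (univ.filter fun s : Finset V => s.card ≤ 1)
      = insert ∅ (univ.image fun a : V => ({a} : Finset V)) := by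
    ext s
    simp only [mem_filter, mem_univ, true_and, mem_insert, mem_image]
    constructor
    · intro h
      rcases Nat.le_one_iff_eq_zero_or_eq_one.mp h with h | h
      · exact Or.inl (card_eq_zero.mp h)
      · obtain ⟨a, ha⟩ := card_eq_one.mp h
        exact Or.inr ⟨a, by simp [ha]⟩
    · rintro (rfl | ⟨a, -, rfl⟩) <;> simp
  rw [h, card_insert_of_notMem, card_image_of_injective _ Finset.singleton_injective,
    card_univ]
  simp only [mem_image, mem_univ, true_and, not_exists]
  exact fun a => Finset.singleton_ne_empty a

theorem indep_add_indep_compl_eq_iff {V : Type*} [Fintype V] (G : SimpleGraph V) (n : ℕ)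
    (hn : Fintype.card V = n) :
    indepCount G + indepCount Gᶜ = 2 ^ n + n + 1 ↔ G = ⊤ ∨ G = ⊥ := by
  classical
  subst hn
  set n := Fintype.card V with hn
  -- rewrite counts as filter cards
  have hcompl : indepCount Gᶜ = cliqueCount G := by
    rw [indepCount, compl_compl]
  rw [indepCount, hcompl, cliqueCount_eq_card_filter, cliqueCount_eq_card_filter]
  set A := univ.filter fun s : Finset V => Gᶜ.IsClique (s : Set V) with hA
  set B := univ.filter fun s : Finset V => G.IsClique (s : Set V) with hB
  -- intersection is the sets of size ≤ 1
  have hinter : A ∩ B = univ.filter fun s : Finset V => s.card ≤ 1 := by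
    ext s
    simp only [hA, hB, mem_inter, mem_filter, mem_univ, true_and]
    constructor
    · rintro ⟨h1, h2⟩
      rw [Finset.card_le_one]
      intro a ha b hb
      by_contra hab
      exact (h1 (by exact_mod_cast ha) (by exact_mod_cast hb) hab).2
        (h2 (by exact_mod_cast ha) (by exact_mod_cast hb) hab)
    · intro h
      have hs : (s : Set V).Subsingleton := by
        intro a ha b hb
        exact Finset.card_le_one.mp h a (by exact_mod_cast ha) b (by exact_mod_cast hb)
      constructor <;> exact fun a ha b hb hab => absurd (hs ha hb) hab
  have hcard2 : Fintype.card (Finset V) = 2 ^ n := by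
    rw [Fintype.card_finset, hn]
  have hkey : A.card + B.card = (A ∪ B).card + (n + 1) := by
    rw [← Finset.card_union_add_card_inter, hinter, card_filter_card_le_one]
  constructor
  · intro h
    by_contra hcon
    push_neg at hcon
    obtain ⟨hT, hBot⟩ := hcon
    -- G has an edge and a non-edge
    obtain ⟨u, v, huv⟩ : ∃ u v, G.Adj u v := by
      by_contra hno
      push_neg at hno
      exact hBot (by ext a b; simp [hno a b])
    obtain ⟨x, y, hxy, hnadj⟩ : ∃ x y, x ≠ y ∧ ¬ G.Adj x y := by
      by_contra hno
      push_neg at hno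
      apply hT
      ext a b
      simp only [top_adj]
      exact ⟨fun h => h.ne, fun h => hno a b h⟩
    -- the union must be everything
    have hU : (A ∪ B).card = 2 ^ n := by omega
    have hUuniv : A ∪ B = univ := Finset.eq_univ_of_card _ (by rw [hU, hcard2])
    -- but {u,v,x,y} is in neither
    set S : Finset V := {u, v, x, y} with hS
    have hmem : S ∈ A ∪ B := hUuniv ▸ mem_univ S
    have huS : u ∈ S := by simp [hS]
    have hvS : v ∈ S := by simp [hS]
    have hxS : x ∈ S := by simp [hS]
    have hyS : y ∈ S := by simp [hS]
    rcases Finset.mem_union.mp hmem with hm | hm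
    · have := (mem_filter.mp hm).2
      exact (this (by exact_mod_cast huS) (by exact_mod_cast hvS) huv.ne).2 huv
    · have := (mem_filter.mp hm).2
      exact hnadj (this (by exact_mod_cast hxS) (by exact_mod_cast hyS) hxy)
  · rintro (rfl | rfl)
    · have hAeq : A = univ.filter fun s : Finset V => s.card ≤ 1 := by
        rw [hA]
        ext s
        simp only [mem_filter, mem_univ, true_and, compl_top, isClique_bot_iff]
        constructor
        · intro h
          exact Finset.card_le_one.mpr fun a ha b hb =>
            h (by exact_mod_cast ha) (by exact_mod_cast hb)
        · intro h a ha b hb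
          exact Finset.card_le_one.mp h a (by exact_mod_cast ha) b (by exact_mod_cast hb)
      have hBeq : B = univ := by
        rw [hB]
        apply Finset.eq_univ_of_forall
        intro s
        simp only [mem_filter, mem_univ, true_and]
        exact fun a _ b _ hab => hab
      rw [hAeq, hBeq, card_filter_card_le_one, card_univ, hcard2]
      omega
    · have hBeq : B = univ.filter fun s : Finset V => s.card ≤ 1 := by
        rw [hB]
        ext s
        simp only [mem_filter, mem_univ, true_and, isClique_bot_iff]
        constructor
        · intro h
          exact Finset.card_le_one.mpr fun a ha b hb =>
            h (by exact_mod_cast ha) (by exact_mod_cast hb)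
        · intro h a ha b hb
          exact Finset.card_le_one.mp h a (by exact_mod_cast ha) b (by exact_mod_cast hb)
      have hAeq : A = univ := by
        rw [hA]
        apply Finset.eq_univ_of_forall
        intro s
        simp only [mem_filter, mem_univ, true_and, compl_bot]
        exact fun a _ b _ hab => hab
      rw [hAeq, hBeq, card_filter_card_le_one, card_univ, hcard2]
      omega
end

section
/- For any graph G and vertices x, y of G, the number of independent sets of G is at most the number of independent sets of the compression G_{x→y}. -/
open SimpleGraph Finset

/-- `v` is in `N_x`: adjacent to `x` but not to `y`, and outside `{x, y}`. -/
def NxSet {V : Type*} (G : SimpleGraph V) (x y v : V) : Prop :=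
  v ≠ x ∧ v ≠ y ∧ G.Adj v x ∧ ¬ G.Adj v y

/-- The compression `G_{x→y}`: edges from `x` to `N_x` are removed and replaced by
edges from `y` to `N_x`; all other adjacencies are unchanged. -/
def compress {V : Type*} (G : SimpleGraph V) (x y : V) : SimpleGraph V where
  Adj a b := a ≠ b ∧ ((G.Adj a b ∧ ¬ ((NxSet G x y a ∧ b = x) ∨ (NxSet G x y b ∧ a = x))) ∨
    (a = y ∧ NxSet G x y b) ∨ (b = y ∧ NxSet G x y a))
  symm := by
    constructor
    intro a b hab
    obtain ⟨hne, h⟩ := hab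
    refine ⟨hne.symm, ?_⟩
    rw [G.adj_comm b a]
    tauto
  loopless := by constructor; intro a h; exact h.1 rfl

/-! Send an independent set `s` of `G` to itself when it stays independent in `G_{x→y}`, and
otherwise to `s - y + x`. A set that stops being independent contains `y` and a vertex of
`N_x`, so it avoids `x`; its image is independent in `G_{x→y}` (every neighbour of `x` there
other than `y` is a neighbour of `y` in `G`) but not in `G` (it contains `x` and a vertex of
`N_x`). Hence the two kinds of images cannot collide, and the swap is injective on sets
containing `y` and avoiding `x`. -/
theorem Set.ncard_le_ncard_of_mapsTo_sdiff {α : Type*} {A B : Set α} (hB : B.Finite) (g : α → α)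
    (hmaps : MapsTo g (A \ B) (B \ A)) (hinj : InjOn g (A \ B)) :
    A.ncard ≤ B.ncard := by
  by_cases hA : A.Finite
  · calc A.ncard = (A ∩ B).ncard + (A \ B).ncard :=
          (ncard_inter_add_ncard_sdiff_eq_ncard A B hA).symm
      _ ≤ (B ∩ A).ncard + (B \ A).ncard := by
        rw [inter_comm]
        exact Nat.add_le_add_left (ncard_le_ncard_of_injOn g hmaps hinj hB.sdiff) _
      _ = B.ncard := ncard_inter_add_ncard_sdiff_eq_ncard B A hB
  · simp [Infinite.ncard hA]

theorem Finset.injOn_insert_erase {α : Type*} [DecidableEq α] (x y : α) :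
    Set.InjOn (fun s : Finset α => insert x (s.erase y)) {s | y ∈ s ∧ x ∉ s} := by
  refine Set.LeftInvOn.injOn (f₁' := fun t => insert y (t.erase x)) ?_
  rintro s ⟨hy, hx⟩
  dsimp only
  rw [erase_insert (fun h => hx (mem_of_mem_erase h)), insert_erase hy]

lemma indepCount_eq_ncard {V : Type*} (G : SimpleGraph V) :
    indepCount G = {s : Finset V | G.IsIndepSet (s : Set V)}.ncard := by
  simp only [indepCount, cliqueCount, isClique_compl]
  rfl

section compress

variable {V : Type*} {G : SimpleGraph V} {x y a b : V}

lemma adj_of_compress_adj (hay : a ≠ y) (hby : b ≠ y) (h : (compress G x y).Adj a b) :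
    G.Adj a b := by
  obtain ⟨-, ⟨hab, -⟩ | ⟨rfl, -⟩ | ⟨rfl, -⟩⟩ := h
  exacts [hab, absurd rfl hay, absurd rfl hby]

lemma adj_of_compress_adj_left (hby : b ≠ y) (h : (compress G x y).Adj x b) : G.Adj b y := by
  obtain ⟨hxb, ⟨hxb', hkept⟩ | ⟨hxy, -, -, hbx, hby'⟩ | ⟨rfl, -⟩⟩ := h
  · by_contra hby'
    exact hkept (Or.inr ⟨⟨hxb.symm, hby, hxb'.symm, hby'⟩, rfl⟩)
  · exact absurd (hxy ▸ hbx) hby'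
  · exact absurd rfl hby

variable {s : Finset V}

lemma exists_nxSet_of_not_isIndepSet_compress (hs : G.IsIndepSet s)
    (hns : ¬(compress G x y).IsIndepSet s) : y ∈ s ∧ ∃ v ∈ s, NxSet G x y v := by
  obtain ⟨a, ha, b, hb, hne, hab⟩ : ∃ a ∈ s, ∃ b ∈ s, a ≠ b ∧ (compress G x y).Adj a b := by
    simpa [Set.Pairwise] using hns
  obtain ⟨-, ⟨hGab, -⟩ | ⟨rfl, hb'⟩ | ⟨rfl, ha'⟩⟩ := hab
  exacts [absurd hGab (hs ha hb hne), ⟨ha, b, hb, hb'⟩, ⟨hb, a, ha, ha'⟩]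

variable [DecidableEq V]

lemma isIndepSet_compress_insert_erase (hs : G.IsIndepSet s) (hy : y ∈ s) :
    (compress G x y).IsIndepSet (insert x (s.erase y) : Finset V) := by
  rw [coe_insert, isIndepSet_iff, Set.pairwise_insert]
  refine ⟨fun a ha b hb hab hadj => ?_, fun b hb _ => ?_⟩
  · exact hs (mem_of_mem_erase ha) (mem_of_mem_erase hb) hab
      (adj_of_compress_adj (ne_of_mem_erase ha) (ne_of_mem_erase hb) hadj)
  · have hxb : ¬(compress G x y).Adj x b := fun hadj =>
      hs (mem_of_mem_erase hb) hy (ne_of_mem_erase hb)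
        (adj_of_compress_adj_left (ne_of_mem_erase hb) hadj)
    exact ⟨hxb, fun hbx => hxb hbx.symm⟩

lemma not_isIndepSet_insert_erase {v : V} (hv : v ∈ s) (hvN : NxSet G x y v) :
    ¬G.IsIndepSet (insert x (s.erase y) : Finset V) := by
  obtain ⟨hvx, hvy, hvx', -⟩ := hvN
  intro h
  exact h (by simp [hv, hvy]) (by simp) hvx hvx'

end compress

theorem indepCount_le_indepCount_compress_general {V : Type*} [Fintype V] (G : SimpleGraph V)
    (x y : V) :
    indepCount G ≤ indepCount (compress G x y) := by
  classical
  rw [indepCount_eq_ncard, indepCount_eq_ncard]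
  refine Set.ncard_le_ncard_of_mapsTo_sdiff (Set.toFinite _) (fun s => insert x (s.erase y))
    ?_ ((Finset.injOn_insert_erase x y).mono ?_)
  · rintro s ⟨hs, hns⟩
    obtain ⟨hy, v, hv, hvN⟩ := exists_nxSet_of_not_isIndepSet_compress hs hns
    exact ⟨isIndepSet_compress_insert_erase hs hy, not_isIndepSet_insert_erase hv hvN⟩
  · rintro s ⟨hs, hns⟩
    obtain ⟨hy, v, hv, hvN⟩ := exists_nxSet_of_not_isIndepSet_compress hs hns
    exact ⟨hy, fun hx => hs hv hx hvN.1 hvN.2.2.1⟩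

theorem indepCount_le_indepCount_compress {V : Type*} [Fintype V] (G : SimpleGraph V)
    (x y : V) (hxy : x ≠ y) :
    indepCount G ≤ indepCount (compress G x y) :=
  indepCount_le_indepCount_compress_general G x y
end

section
/- For any graph G, any vertices x, y, and any t ≥ 0, the number of independent sets of size t in G is at most the number of independent sets of size t in the compression G_{x→y}. -/
open SimpleGraph Finset

/-- Number of independent sets of `G` of cardinality exactly `t`. -/
noncomputable def indepCountAt {V : Type*} (G : SimpleGraph V) (t : ℕ) : ℕ :=
  Nat.card {s : Finset V // s.card = t ∧ Gᶜ.IsClique (s : Set V)}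
/-!
Send an independent set `s` of `G` to itself if it stays independent in `G_{x→y}`, and to
`s - y + x` otherwise. An independent set of `G` can only break in `G_{x→y}` through a new edge
`y v` with `v ∈ N_x`, so it contains `y` and such a `v`, and hence not `x`. Replacing `y` by `x`
repairs it, since the only edges at `x` in `G_{x→y}` go to neighbours of `y` (or to `y`). The map
is injective: a repaired set contains `x` together with its `G`-neighbour `v`, so it is not
independent in `G`, and `s ↦ s - y + x` is injective on sets containing `y` but not `x`.
-/

section

variable {V : Type*} {G : SimpleGraph V} {x y a b : V}

lemma compress_adj :
    (compress G x y).Adj a b ↔ a ≠ b ∧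
      ((G.Adj a b ∧ ¬ ((NxSet G x y a ∧ b = x) ∨ (NxSet G x y b ∧ a = x))) ∨
        (a = y ∧ NxSet G x y b) ∨ (b = y ∧ NxSet G x y a)) := Iff.rfl

lemma eq_and_nxSet_of_compress_adj_of_not_adj (h : (compress G x y).Adj a b)
    (hG : ¬ G.Adj a b) : (a = y ∧ NxSet G x y b) ∨ (b = y ∧ NxSet G x y a) := by
  rw [compress_adj] at h
  tauto

lemma adj_target_of_compress_adj_source (h : (compress G x y).Adj x b) (hb : b ≠ y) :
    G.Adj b y := by
  rw [compress_adj] at h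
  unfold NxSet at h
  by_contra hby
  obtain ⟨hxb, h⟩ := h
  rcases h with ⟨hG, hn⟩ | ⟨rfl, -, -, hbx, hbx'⟩ | ⟨rfl, -⟩
  · exact hn (Or.inr ⟨⟨hxb.symm, hb, hG.symm, hby⟩, rfl⟩)
  · exact hbx' hbx
  · exact hb rfl

variable {s : Set V}

lemma mem_and_exists_nxSet_of_not_isIndepSet_compress (hs : G.IsIndepSet s)
    (hns : ¬ (compress G x y).IsIndepSet s) :
    y ∈ s ∧ x ∉ s ∧ ∃ v ∈ s, NxSet G x y v := by
  simp only [isIndepSet_iff, Set.Pairwise, not_forall, not_not] at hns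
  obtain ⟨a, ha, b, hb, hab, hadj⟩ := hns
  have of_new_edge : ∀ {c d}, c ∈ s → d ∈ s → c = y → NxSet G x y d →
      y ∈ s ∧ x ∉ s ∧ ∃ v ∈ s, NxSet G x y v := by
    rintro c d hc hd rfl hnd
    exact ⟨hc, fun hx => hs hd hx hnd.1 hnd.2.2.1, d, hd, hnd⟩
  rcases eq_and_nxSet_of_compress_adj_of_not_adj hadj (hs ha hb hab) with
    ⟨hay, hnb⟩ | ⟨hby, hna⟩
  · exact of_new_edge ha hb hay hnb
  · exact of_new_edge hb ha hby hna

lemma isIndepSet_compress_insert_diff (hs : G.IsIndepSet s) (hy : y ∈ s) :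
    (compress G x y).IsIndepSet (insert x (s \ {y})) := by
  have hx : ∀ {b}, b ∈ s \ {y} → ¬ (compress G x y).Adj x b := fun ⟨hb, hby⟩ h =>
    hs hb hy hby (adj_target_of_compress_adj_source h hby)
  have hss : (compress G x y).IsIndepSet (s \ {y}) := by
    rintro a ⟨ha, hay⟩ b ⟨hb, hby⟩ hab h
    rcases eq_and_nxSet_of_compress_adj_of_not_adj h (hs ha hb hab) with ⟨rfl, -⟩ | ⟨rfl, -⟩
    · exact hay rfl
    · exact hby rfl
  exact hss.insert fun b hb _ => ⟨hx hb, fun h => hx hb h.symm⟩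

lemma not_isIndepSet_insert_diff_of_nxSet {v : V} (hv : v ∈ s) (hnv : NxSet G x y v) :
    ¬ G.IsIndepSet (insert x (s \ {y})) := fun h =>
  h (Set.mem_insert_of_mem x ⟨hv, hnv.2.1⟩) (Set.mem_insert x _) hnv.1 hnv.2.2.1

variable (G x y)

lemma indepCountAt_eq_ncard (t : ℕ) :
    indepCountAt G t = {s : Finset V | #s = t ∧ G.IsIndepSet (s : Set V)}.ncard := by
  simp only [indepCountAt, isClique_compl]
  rfl

variable [DecidableEq V]

open Classical in
noncomputable def compressFinset (s : Finset V) : Finset V :=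
  if (compress G x y).IsIndepSet (s : Set V) then s else insert x (s.erase y)

lemma mapsTo_compressFinset (t : ℕ) :
    Set.MapsTo (compressFinset G x y) {s | #s = t ∧ G.IsIndepSet (s : Set V)}
      {s | #s = t ∧ (compress G x y).IsIndepSet (s : Set V)} := by
  rintro s ⟨rfl, hs⟩
  unfold compressFinset
  split_ifs with h
  · exact ⟨rfl, h⟩
  obtain ⟨hy, hx, -⟩ := mem_and_exists_nxSet_of_not_isIndepSet_compress hs h
  refine ⟨?_, ?_⟩
  · rw [card_insert_of_notMem fun h => hx (mem_of_mem_erase h), card_erase_add_one hy]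
  · simpa using isIndepSet_compress_insert_diff hs hy

lemma injOn_compressFinset :
    Set.InjOn (compressFinset G x y) {s | G.IsIndepSet (s : Set V)} := by
  have swapped : ∀ {s u : Finset V}, G.IsIndepSet (s : Set V) → G.IsIndepSet (u : Set V) →
      ¬ (compress G x y).IsIndepSet (s : Set V) →
      (compress G x y).IsIndepSet (u : Set V) →
      compressFinset G x y s ≠ compressFinset G x y u := by
    intro s u hs hu hns hcu heq
    obtain ⟨-, -, v, hv, hnv⟩ := mem_and_exists_nxSet_of_not_isIndepSet_compress hs hns
    simp only [compressFinset, if_neg hns, if_pos hcu] at heq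
    exact not_isIndepSet_insert_diff_of_nxSet hv hnv (by simpa [← heq] using hu)
  intro s hs u hu heq
  by_cases hcs : (compress G x y).IsIndepSet (s : Set V) <;>
    by_cases hcu : (compress G x y).IsIndepSet (u : Set V)
  · simpa [compressFinset, hcs, hcu] using heq
  · exact absurd heq.symm (swapped hu hs hcu hcs)
  · exact absurd heq (swapped hs hu hcs hcu)
  obtain ⟨hys, hxs, -⟩ := mem_and_exists_nxSet_of_not_isIndepSet_compress hs hcs
  obtain ⟨hyu, hxu, -⟩ := mem_and_exists_nxSet_of_not_isIndepSet_compress hu hcu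
  simp only [compressFinset, if_neg hcs, if_neg hcu] at heq
  refine erase_injOn' y hys hyu ?_
  simpa [erase_insert fun h => hxs (mem_of_mem_erase h),
    erase_insert fun h => hxu (mem_of_mem_erase h)] using congrArg (erase · x) heq

end

theorem indepCountAt_le_indepCountAt_compress_general {V : Type*} [Fintype V] (G : SimpleGraph V)
    (x y : V) (t : ℕ) :
    indepCountAt G t ≤ indepCountAt (compress G x y) t := by
  classical
  rw [indepCountAt_eq_ncard, indepCountAt_eq_ncard]
  exact Set.ncard_le_ncard_of_injOn _ (mapsTo_compressFinset G x y t)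
    ((injOn_compressFinset G x y).mono fun _ hs => hs.2)

theorem indepCountAt_le_indepCountAt_compress {V : Type*} [Fintype V] (G : SimpleGraph V)
    (x y : V) (hxy : x ≠ y) (t : ℕ) :
    indepCountAt G t ≤ indepCountAt (compress G x y) t :=
  indepCountAt_le_indepCountAt_compress_general G x y t
end

section
/- If G is a graph on n vertices, then i(G) · k(G) ≤ (n+1) · 2^n, with equality when G is the complete graph K_n. -/
open SimpleGraph Finset

/-!
Send a pair `(A, B)` of an independent set and a clique to `A ∆ B`; there are `2 ^ n` possible
values, and each fibre has at most `n + 1` elements. Indeed `A ∩ B` has at most one vertex, and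
`B = A ∆ S` is determined by `A` on the fibre over `S`. If `A ∩ B = ∅`, then `(A, S \ A)` splits
`S` into an independent set and a clique; adding a vertex `a` to `S` creates at most one new such
split, since only `C = S \ N(a)` can be extended both by putting `a` into `C` and into `S \ C`, so
there are at most `|S| + 1` of them. If `A ∩ B = {t}`, then `t ∉ S` and `A = {t} ∪ (S \ N(t))`,
which gives at most `n - |S|` further pairs. For `K_n` all `2 ^ n` sets are cliques and the
`n + 1` sets of size at most one are the independent sets.
-/

open scoped symmDiff

namespace SimpleGraph

variable {V : Type*} {G : SimpleGraph V}

theorem IsIndepSet.subsingleton_inter {s t : Set V} (hs : G.IsIndepSet s) (ht : G.IsClique t) :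
    (s ∩ t).Subsingleton := by
  intro x hx y hy
  by_contra hxy
  exact hs hx.1 hy.1 hxy (ht hx.2 hy.2 hxy)

variable [DecidableEq V] [DecidableRel G.Adj]

theorem eq_filter_not_adj_of_insert {S C : Finset V} {t : V} (ht : t ∉ S) (hCS : C ⊆ S)
    (hC : G.IsIndepSet (insert t C : Finset V)) (hSC : G.IsClique (insert t (S \ C) : Finset V)) :
    C = {x ∈ S | ¬G.Adj t x} := by
  ext x
  have htx : x ∈ S → t ≠ x := by rintro hx rfl; exact ht hx
  simp only [mem_filter]
  constructor
  · intro hx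
    exact ⟨hCS hx, hC (by simp) (by simp [hx]) (htx (hCS hx))⟩
  · rintro ⟨hx, hnadj⟩
    by_contra hxC
    exact hnadj (hSC (by simp) (by simp [hx, hxC]) (htx hx))

variable (G)

def splitParts (S : Finset V) : Finset (Finset V) :=
  {A ∈ S.powerset | G.IsIndepSet (A : Set V) ∧ G.IsClique (S \ A : Finset V)}

theorem mem_splitParts {S A : Finset V} :
    A ∈ G.splitParts S ↔ A ⊆ S ∧ G.IsIndepSet (A : Set V) ∧ G.IsClique (S \ A : Finset V) := by
  simp [splitParts]

variable {G}

theorem erase_mem_splitParts {S A : Finset V} {a : V} (ha : a ∉ S)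
    (hA : A ∈ G.splitParts (insert a S)) : A.erase a ∈ G.splitParts S := by
  obtain ⟨hAS, hA, hSA⟩ := G.mem_splitParts.mp hA
  refine G.mem_splitParts.mpr ⟨fun x hx => ?_, hA.mono (by simp), hSA.subset fun x => ?_⟩
  · exact (mem_insert.mp (hAS (mem_of_mem_erase hx))).resolve_left (ne_of_mem_erase hx)
  · simp only [coe_sdiff, Set.mem_sdiff, mem_coe, mem_erase, mem_insert]
    grind

theorem injOn_erase_splitParts_insert {S : Finset V} {a : V} (ha : a ∉ S) :
    Set.InjOn (fun A : Finset V => A.erase a)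
      ((G.splitParts (insert a S)).erase (insert a {x ∈ S | ¬G.Adj a x}) : Set (Finset V)) := by
  have h_mixed : ∀ A ∈ G.splitParts (insert a S), ∀ A' ∈ G.splitParts (insert a S),
      a ∈ A → a ∉ A' → A.erase a = A'.erase a → A = insert a {x ∈ S | ¬G.Adj a x} := by
    intro A hA A' hA' haA haA' h
    rw [erase_eq_of_notMem haA'] at h
    obtain rfl : A = insert a A' := by rw [← h, insert_erase haA]
    obtain ⟨hA'S, -, hSA'⟩ := G.mem_splitParts.mp hA'
    rw [insert_sdiff_of_notMem _ haA'] at hSA'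
    rw [eq_filter_not_adj_of_insert ha ((subset_insert_iff_of_notMem haA').mp hA'S)
      (G.mem_splitParts.mp hA).2.1 hSA']
  intro A hA A' hA' (h : A.erase a = A'.erase a)
  simp only [coe_erase, Set.mem_sdiff, mem_coe, Set.mem_singleton_iff] at hA hA'
  by_cases haA : a ∈ A <;> by_cases haA' : a ∈ A'
  · rw [← insert_erase haA, ← insert_erase haA', h]
  · exact absurd (h_mixed A hA.1 A' hA'.1 haA haA' h) hA.2
  · exact absurd (h_mixed A' hA'.1 A hA.1 haA' haA h.symm) hA'.2
  · rwa [erase_eq_of_notMem haA, erase_eq_of_notMem haA'] at h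

variable (G)

theorem card_splitParts_le (S : Finset V) : #(G.splitParts S) ≤ #S + 1 := by
  induction S using Finset.induction_on with
  | empty => exact (card_filter_le _ _).trans (by simp)
  | @insert a S ha ih =>
    set D := insert a {x ∈ S | ¬G.Adj a x}
    calc #(G.splitParts (insert a S)) ≤ #((G.splitParts (insert a S)).erase D) + 1 := by
          have := pred_card_le_card_erase (s := G.splitParts (insert a S)) (a := D)
          omega
      _ ≤ #(G.splitParts S) + 1 := by
          gcongr 1
          exact card_le_card_of_injOn _ (fun A hA => erase_mem_splitParts ha (mem_of_mem_erase hA))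
            (injOn_erase_splitParts_insert ha)
      _ ≤ #(insert a S) + 1 := by rw [card_insert_of_notMem ha]; omega

variable {G} in
theorem eq_insert_filter_not_adj {A S : Finset V} {t : V} (hA : G.IsIndepSet (A : Set V))
    (hB : G.IsClique (A ∆ S : Finset V)) (htA : t ∈ A) (htS : t ∉ S) :
    A = insert t {x ∈ S | ¬G.Adj t x} := by
  have htB : t ∈ A ∆ S := mem_symmDiff.mpr (Or.inl ⟨htA, htS⟩)
  have h_erase : A.erase t ⊆ S := by
    intro x hx
    by_contra hxS
    exact ne_of_mem_erase hx <| hA.subsingleton_inter hB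
      ⟨mem_of_mem_erase hx, mem_symmDiff.mpr (Or.inl ⟨mem_of_mem_erase hx, hxS⟩)⟩ ⟨htA, htB⟩
  have h_clique : G.IsClique (insert t (S \ A.erase t) : Finset V) := by
    refine hB.subset (coe_subset.mpr fun x hx => ?_)
    simp only [mem_insert, mem_sdiff, mem_erase, mem_symmDiff] at hx ⊢
    grind
  rw [← eq_filter_not_adj_of_insert htS h_erase (by rwa [insert_erase htA]) h_clique,
    insert_erase htA]

variable [Fintype V]

theorem card_filter_isIndepSet_isClique_symmDiff_le (S : Finset V) :
    #{A : Finset V | G.IsIndepSet (A : Set V) ∧ G.IsClique (A ∆ S : Finset V)} ≤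
      Fintype.card V + 1 := by
  set T := (univ \ S).image fun t => insert t {x ∈ S | ¬G.Adj t x}
  have h_sub : ({A : Finset V | G.IsIndepSet (A : Set V) ∧ G.IsClique (A ∆ S : Finset V)} :
      Finset (Finset V)) ⊆ G.splitParts S ∪ T := by
    intro A hA
    obtain ⟨-, hA, hB⟩ := mem_filter.mp hA
    by_cases hAS : A ⊆ S
    · rw [symmDiff_of_le hAS] at hB
      exact mem_union_left _ (G.mem_splitParts.mpr ⟨hAS, hA, hB⟩)
    · obtain ⟨t, htA, htS⟩ := not_subset.mp hAS
      exact mem_union_right _ (mem_image.mpr ⟨t, mem_sdiff.mpr ⟨mem_univ t, htS⟩,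
        (eq_insert_filter_not_adj hA hB htA htS).symm⟩)
  calc _ ≤ #(G.splitParts S) + #T := (card_le_card h_sub).trans (card_union_le _ _)
    _ ≤ (#S + 1) + (Fintype.card V - #S) := by
      rw [← card_univ_sdiff]
      exact add_le_add (G.card_splitParts_le S) card_image_le
    _ = Fintype.card V + 1 := by have := card_le_univ S; omega

theorem card_isIndepSet_mul_card_isClique_le :
    #{A : Finset V | G.IsIndepSet (A : Set V)} * #{B : Finset V | G.IsClique (B : Set V)} ≤
      (Fintype.card V + 1) * 2 ^ Fintype.card V := by
  rw [← card_product, ← Fintype.card_finset, ← card_univ]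
  refine card_le_mul_card_image_of_maps_to (f := fun p => p.1 ∆ p.2) (fun _ _ => mem_univ _) _
    fun S _ => (card_le_card_of_injOn Prod.fst ?_ ?_).trans
      (G.card_filter_isIndepSet_isClique_symmDiff_le S)
  · intro p hp
    simp only [coe_filter, mem_product, mem_filter, mem_univ, true_and, Set.mem_ofPred_eq] at hp ⊢
    obtain ⟨⟨hA, hB⟩, rfl⟩ := hp
    rw [symmDiff_symmDiff_cancel_left]
    exact ⟨hA, hB⟩
  · intro p hp q hq (h : p.1 = q.1)
    simp only [coe_filter, Set.mem_ofPred_eq] at hp hq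
    refine Prod.ext h ?_
    rw [← symmDiff_symmDiff_cancel_left p.1 p.2, hp.2, h, ← hq.2, symmDiff_symmDiff_cancel_left]

end SimpleGraph

section Counts

variable {V : Type*} [Fintype V]

theorem cliqueCount_eq_card_filter_s5 [DecidableEq V] (G : SimpleGraph V) [DecidableRel G.Adj] :
    cliqueCount G = #{s : Finset V | G.IsClique (s : Set V)} := by
  rw [cliqueCount, Nat.card_eq_fintype_card, Fintype.card_subtype]

theorem indepCount_eq_card_filter [DecidableEq V] (G : SimpleGraph V) [DecidableRel G.Adj] :
    indepCount G = #{s : Finset V | G.IsIndepSet (s : Set V)} := by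
  simp only [indepCount, cliqueCount_eq_card_filter_s5, isClique_compl]

theorem cliqueCount_top : cliqueCount (⊤ : SimpleGraph V) = 2 ^ Fintype.card V := by
  rw [cliqueCount,
    Nat.card_congr (Equiv.subtypeUnivEquiv fun s : Finset V => IsClique.top (s : Set V)),
    Nat.card_eq_fintype_card, Fintype.card_finset]

theorem cliqueCount_bot : cliqueCount (⊥ : SimpleGraph V) = Fintype.card V + 1 := by
  classical
  have h : ({s | (⊥ : SimpleGraph V).IsClique (s : Set V)} : Finset (Finset V)) =
      insert ∅ (univ.map ⟨singleton, singleton_injective⟩) := by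
    ext s
    simp [isClique_bot_iff, Set.subsingleton_iff_eq_empty_or_singleton, eq_comm (b := s)]
  rw [cliqueCount_eq_card_filter_s5, h, card_insert_of_notMem (by simp), card_map, card_univ]

theorem indepCount_top : indepCount (⊤ : SimpleGraph V) = Fintype.card V + 1 := by
  rw [indepCount, compl_top, cliqueCount_bot]

end Counts

theorem pi_le_and_eq_top {V : Type*} [Fintype V] (G : SimpleGraph V) (n : ℕ)
    (hn : Fintype.card V = n) :
    indepCount G * cliqueCount G ≤ (n + 1) * 2 ^ n ∧
      indepCount (⊤ : SimpleGraph V) * cliqueCount (⊤ : SimpleGraph V) = (n + 1) * 2 ^ n := by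
  classical
  subst hn
  refine ⟨?_, by rw [indepCount_top, cliqueCount_top]⟩
  rw [indepCount_eq_card_filter, cliqueCount_eq_card_filter_s5]
  exact G.card_isIndepSet_mul_card_isClique_le
end

section
/- Let the edges of K_n be r-colored with color graphs G_1, ..., G_r. Call a sequence of distinct vertices (v_1,...,v_q) good if for each i < q there is a color C_i such that all of v_{i+1},...,v_q lie in the C_i-colored neighborhood of v_i. Then the number of good sequences of length q is at most q! · Π_{i=1}^r k(G_i). -/
open SimpleGraph Finset

/-- The graph of color-`i` edges of an edge coloring `c` of the complete graph. -/
def colorGraph {V : Type*} {r : ℕ} (c : V → V → Fin r) (i : Fin r) : SimpleGraph V where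
  Adj u v := u ≠ v ∧ c u v = i ∧ c v u = i
  symm := ⟨by intro u v h; exact ⟨h.1.symm, h.2.2, h.2.1⟩⟩
  loopless := ⟨fun u h => h.1 rfl⟩

/-- `(v 0, …, v (q-1))` is a good sequence: the vertices are distinct and for each `i`
there is a color `C i` such that all later vertices lie in the `C i`-neighborhood of `v i`. -/
def GoodSeq {V : Type*} {r q : ℕ} (c : V → V → Fin r) (v : Fin q → V) : Prop :=
  Function.Injective v ∧ ∀ i : Fin q, ∃ C : Fin r, ∀ j : Fin q, i < j → c (v i) (v j) = C

/-!
A good sequence `v` yields, for each color `k`, the set of the `v i` with `C i = k`; by symmetry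
of the coloring this is a clique of `G_k`. These `r` cliques cover the `q` distinct vertices of
`v`, so `v` is an ordering of their union, and at most `q!` good sequences yield the same tuple of
cliques.
-/

open Function
open scoped Nat

section

variable {V : Type*}

lemma Nat.card_equiv_le {α β : Type*} [Finite α] : Nat.card (α ≃ β) ≤ (Nat.card α)! := by
  rcases isEmpty_or_nonempty (α ≃ β) with _ | ⟨⟨e⟩⟩
  · simp
  · rw [Nat.card_congr ((Equiv.refl α).equivCongr e.symm), Nat.card_perm]

lemma card_injective_range_eq_le (q : ℕ) (T : Set V) :
    Nat.card {v : Fin q → V // Injective v ∧ Set.range v = T} ≤ q ! := by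
  let toEquiv (v : {v : Fin q → V // Injective v ∧ Set.range v = T}) : Fin q ≃ T :=
    .ofBijective (T.codRestrict v.1 fun i => v.2.2.subset ⟨i, rfl⟩)
      ⟨v.2.1.codRestrict _, fun ⟨x, hx⟩ => by
        obtain ⟨i, rfl⟩ := v.2.2.symm.subset hx
        exact ⟨i, rfl⟩⟩
  have toEquiv_injective : Injective toEquiv := fun v w h => by
    ext i : 2
    exact congrArg (fun e => (e i : V)) h
  simpa using Nat.card_le_card_of_injective toEquiv toEquiv_injective |>.trans Nat.card_equiv_le

namespace GoodSeq

variable {r q : ℕ} {c : V → V → Fin r} {v : Fin q → V}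

noncomputable def color (hv : GoodSeq c v) (i : Fin q) : Fin r := (hv.2 i).choose

lemma color_spec (hv : GoodSeq c v) {i j : Fin q} (hij : i < j) : c (v i) (v j) = hv.color i :=
  (hv.2 i).choose_spec j hij

noncomputable def colorClass [DecidableEq V] (hv : GoodSeq c v) (k : Fin r) : Finset V :=
  (univ.filter (hv.color · = k)).image v

lemma isClique_colorClass [DecidableEq V] (hc : ∀ u w, c u w = c w u) (hv : GoodSeq c v)
    (k : Fin r) : (colorGraph c k).IsClique (hv.colorClass k : Set V) := by
  have adj_of_lt {i j : Fin q} (hi : hv.color i = k) (hij : i < j) :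
      (colorGraph c k).Adj (v i) (v j) :=
    ⟨hv.1.ne hij.ne, hv.color_spec hij ▸ hi, hc _ _ ▸ hv.color_spec hij ▸ hi⟩
  rintro _ hx _ hy hxy
  simp only [colorClass, coe_image, coe_filter, mem_univ, true_and, Set.mem_image,
    Set.mem_ofPred_eq] at hx hy
  obtain ⟨i, hi, rfl⟩ := hx
  obtain ⟨j, hj, rfl⟩ := hy
  rcases lt_or_gt_of_ne (ne_of_apply_ne v hxy) with hij | hji
  · exact adj_of_lt hi hij
  · exact (adj_of_lt hj hji).symm

lemma range_eq_iUnion_colorClass [DecidableEq V] (hv : GoodSeq c v) :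
    Set.range v = ⋃ k, (hv.colorClass k : Set V) := by
  ext x
  simp [colorClass]

end GoodSeq

end

theorem goodSeq_card_le_general {V : Type*} [Fintype V] (r q : ℕ)
    (c : V → V → Fin r) (hc : ∀ u v, c u v = c v u) :
    Nat.card {v : Fin q → V // GoodSeq c v} ≤
      Nat.factorial q * ∏ i, cliqueCount (colorGraph c i) := by
  classical
  let Cliques := ∀ k, {s : Finset V // (colorGraph c k).IsClique (s : Set V)}
  let Fiber (s : Cliques) :=
    {v : Fin q → V // Injective v ∧ Set.range v = ⋃ k, ((s k).1 : Set V)}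
  let encode (v : {v : Fin q → V // GoodSeq c v}) : Σ s, Fiber s :=
    ⟨fun k => ⟨v.2.colorClass k, v.2.isClique_colorClass hc k⟩,
      v.1, v.2.1, v.2.range_eq_iUnion_colorClass⟩
  have encode_injective : Injective encode := fun v w h => Subtype.ext (by
    simpa using congrArg (fun x => x.2.1) h)
  calc Nat.card {v : Fin q → V // GoodSeq c v}
      ≤ Nat.card (Σ s, Fiber s) := Nat.card_le_card_of_injective encode encode_injective
    _ = ∑ s, Nat.card (Fiber s) := Nat.card_sigma
    _ ≤ ∑ _ : Cliques, q ! := Finset.sum_le_sum fun s _ => card_injective_range_eq_le q _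
    _ = q ! * ∏ i, cliqueCount (colorGraph c i) := by
        rw [Finset.sum_const, Finset.card_univ, smul_eq_mul, mul_comm, ← Nat.card_eq_fintype_card,
          Nat.card_pi]
        rfl

theorem goodSeq_card_le {V : Type*} [Fintype V] (r q : ℕ) (hr : 2 ≤ r)
    (c : V → V → Fin r) (hc : ∀ u v, c u v = c v u) :
    Nat.card {v : Fin q → V // GoodSeq c v} ≤
      Nat.factorial q * ∏ i, cliqueCount (colorGraph c i) :=
  goodSeq_card_le_general r q c hc
end

section
/- Let the edges of K_n be r-colored, and define a_1 = n and a_{j+1} = ⌈(a_j − 1)/r⌉. With good sequences defined as: (v_1,...,v_q) distinct vertices such that for each i < q there is a color C_i with {v_{i+1},...,v_q} contained in the C_i-neighborhood of v_i, the number of good sequences of length q is at least Π_{j=1}^q a_j. -/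
open SimpleGraph Finset

/-! Greedy counting: whatever vertex `v` of the current set `A` is taken first, pigeonhole
gives a colour `C` with at least `⌈(|A| - 1) / r⌉` neighbours of colour `C` in `A`, and
prepending `v` to a good sequence inside that colour class yields a good sequence in `A`,
injectively in the pair (`v`, tail). Summing over `v` and inducting on the length gives the
product bound. -/

theorem Finset.exists_ceilDiv_le_card_fiber {α β : Type*} [Fintype β] [Nonempty β]
    [DecidableEq β] (s : Finset α) (f : α → β) :
    ∃ y, (#s + (Fintype.card β - 1)) / Fintype.card β ≤ #{x ∈ s | f x = y} := by
  set r := Fintype.card β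
  have hr : 0 < r := Fintype.card_pos
  rcases s.eq_empty_or_nonempty with rfl | hs
  · exact ⟨Classical.arbitrary β, by simp [Nat.div_eq_of_lt (Nat.sub_lt hr one_pos)]⟩
  obtain ⟨y, -, hy⟩ := exists_lt_card_fiber_of_mul_lt_card_of_maps_to (t := univ)
    (f := f) (s := s) (n := (#s - 1) / r) (fun _ _ => mem_univ _)
    (by rw [card_univ]; exact (Nat.mul_div_le _ _).trans_lt (Nat.sub_lt hs.card_pos one_pos))
  refine ⟨y, ?_⟩
  rwa [show #s + (r - 1) = #s - 1 + r by have := hs.card_pos; omega, Nat.add_div_right _ hr,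
    Nat.succ_le_iff]

section GoodSeq

variable {V : Type*} {r : ℕ}

theorem GoodSeq.cons {q : ℕ} {c : V → V → Fin r} {w : Fin q → V} (hw : GoodSeq c w)
    {v₀ : V} (hv₀ : v₀ ∉ Set.range w) {C : Fin r} (hC : ∀ j, c v₀ (w j) = C) :
    GoodSeq c (Fin.cons v₀ w : Fin (q + 1) → V) := by
  refine ⟨Fin.cons_injective_iff.2 ⟨hv₀, hw.1⟩, Fin.cases ⟨C, ?_⟩ fun i => ?_⟩
  · intro j hj
    obtain ⟨j, rfl⟩ := Fin.exists_succ_eq.2 hj.ne'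
    simpa using hC j
  · obtain ⟨C', hC'⟩ := hw.2 i
    refine ⟨C', Fin.cases (fun h => absurd h (Fin.not_lt_zero _)) fun j hij => ?_⟩
    simpa using hC' j (Fin.succ_lt_succ_iff.1 hij)

variable [DecidableEq V]

def colorNeighborsIn (c : V → V → Fin r) (A : Finset V) (v : V) (C : Fin r) : Finset V :=
  {u ∈ A.erase v | c v u = C}

@[simp]
theorem mem_colorNeighborsIn {c : V → V → Fin r} {A : Finset V} {v u : V} {C : Fin r} :
    u ∈ colorNeighborsIn c A v C ↔ u ≠ v ∧ u ∈ A ∧ c v u = C := by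
  simp [colorNeighborsIn, and_assoc]

theorem exists_color_le_card_colorNeighborsIn (c : V → V → Fin r) {A : Finset V} {v : V}
    (hv : v ∈ A) : ∃ C, (#A - 1 + (r - 1)) / r ≤ #(colorNeighborsIn c A v C) := by
  have : Nonempty (Fin r) := ⟨c v v⟩
  simpa [colorNeighborsIn, card_erase_of_mem hv] using
    (A.erase v).exists_ceilDiv_le_card_fiber (c v)

theorem sum_card_goodSeq_colorNeighborsIn_le [Finite V] {q : ℕ} (c : V → V → Fin r)
    (A : Finset V) (C : A → Fin r) :
    ∑ v : A,
        Nat.card {w : Fin q → V // (∀ i, w i ∈ colorNeighborsIn c A v (C v)) ∧ GoodSeq c w}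
      ≤ Nat.card {u : Fin (q + 1) → V // (∀ i, u i ∈ A) ∧ GoodSeq c u} := by
  rw [← Nat.card_sigma]
  refine Nat.card_le_card_of_injective (fun p => ⟨Fin.cons p.1.1 p.2.1, ?_⟩) fun p p' h => ?_
  · obtain ⟨⟨v, hv⟩, w, hwN, hw⟩ := p
    simp only [mem_colorNeighborsIn] at hwN
    refine ⟨Fin.cases hv fun i => (hwN i).2.1, hw.cons ?_ fun j => (hwN j).2.2⟩
    rintro ⟨j, hj⟩
    exact (hwN j).1 hj
  · obtain ⟨⟨v, hv⟩, w, hw⟩ := p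
    obtain ⟨⟨v', hv'⟩, w', hw'⟩ := p'
    simp only [Subtype.mk.injEq, Fin.cons_inj] at h
    obtain ⟨rfl, rfl⟩ := h
    rfl

theorem prod_le_card_goodSeq_in [Finite V] (c : V → V → Fin r) :
    ∀ (q : ℕ) (b : ℕ → ℕ), (∀ j, b (j + 1) ≤ (b j - 1 + (r - 1)) / r) →
      ∀ A : Finset V, b 0 ≤ #A →
        ∏ j ∈ range q, b j ≤ Nat.card {v : Fin q → V // (∀ i, v i ∈ A) ∧ GoodSeq c v}
  | 0, _, _, A, _ => by
    have : Nonempty {v : Fin 0 → V // (∀ i, v i ∈ A) ∧ GoodSeq c v} :=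
      ⟨Fin.elim0, fun i => i.elim0, Function.injective_of_subsingleton _, fun i => i.elim0⟩
    exact Nat.card_pos
  | q + 1, b, hb, A, hbA => by
    choose C hC using fun v : A => exists_color_le_card_colorNeighborsIn c v.2
    have hbC : ∀ v : A, b 1 ≤ #(colorNeighborsIn c A v (C v)) := fun v =>
      (hb 0).trans <| (Nat.div_le_div_right (by omega)).trans (hC v)
    calc ∏ j ∈ range (q + 1), b j = (∏ j ∈ range q, b (j + 1)) * b 0 := prod_range_succ' _ _
      _ ≤ ∑ _v : A, ∏ j ∈ range q, b (j + 1) := by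
        rw [sum_const, card_univ, Fintype.card_coe, smul_eq_mul, mul_comm]
        exact Nat.mul_le_mul_right _ hbA
      _ ≤ ∑ v : A, Nat.card
          {w : Fin q → V // (∀ i, w i ∈ colorNeighborsIn c A v (C v)) ∧ GoodSeq c w} :=
        sum_le_sum fun v _ => prod_le_card_goodSeq_in c q _ (fun j => hb (j + 1)) _ (hbC v)
      _ ≤ _ := sum_card_goodSeq_colorNeighborsIn_le c A C

end GoodSeq

theorem goodSeq_card_ge_general {V : Type*} [Fintype V] (n r q : ℕ)
    (hn : Fintype.card V = n) (c : V → V → Fin r)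
    (a : ℕ → ℕ) (ha1 : a 1 = n)
    (harec : ∀ j ≥ 1, a (j + 1) = (a j - 1 + (r - 1)) / r) :
    ∏ j ∈ Finset.Icc 1 q, a j ≤ Nat.card {v : Fin q → V // GoodSeq c v} := by
  classical
  have hprod : ∏ j ∈ Icc 1 q, a j = ∏ j ∈ range q, a (j + 1) := by
    rw [← Ico_add_one_right_eq_Icc, prod_Ico_eq_prod_range]
    simp [add_comm]
  have := prod_le_card_goodSeq_in c q (fun j => a (j + 1))
    (fun j => (harec (j + 1) (by omega)).le) univ (by simp [ha1, hn])
  simpa [hprod] using this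

theorem goodSeq_card_ge {V : Type*} [Fintype V] (n r q : ℕ) (hr : 2 ≤ r)
    (hn : Fintype.card V = n) (c : V → V → Fin r) (hc : ∀ u v, c u v = c v u)
    (a : ℕ → ℕ) (ha1 : a 1 = n)
    (harec : ∀ j ≥ 1, a (j + 1) = (a j - 1 + (r - 1)) / r) :
    ∏ j ∈ Finset.Icc 1 q, a j ≤ Nat.card {v : Fin q → V // GoodSeq c v} :=
  goodSeq_card_ge_general n r q hn c a ha1 harec
end

section
/- If the binomial coefficient C(r,2) divides n with r ≥ 2, then there exist pairwise edge-disjoint graphs G_1, ..., G_r on a common set of n vertices such that Π_{i=1}^r k(G_i) ≥ (n / C(r,2))^{C(r,2)} · 2^n. -/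
open SimpleGraph Finset

namespace EDP

/-- Ordered pairs indexing the edges of the complete graph on `Fin r`,
oriented from smaller to larger endpoint. -/
abbrev E (r : ℕ) := {p : Fin r × Fin r // p.1 < p.2}

def edgeEquiv (r : ℕ) : E r ≃ Σ b : Fin r, Fin (b : ℕ) where
  toFun e := ⟨e.1.2, ⟨e.1.1, e.2⟩⟩
  invFun x := ⟨(⟨x.2.1, x.2.2.trans x.1.2⟩, x.1), x.2.2⟩
  left_inv _ := rfl
  right_inv _ := rfl

lemma card_E (r : ℕ) : Fintype.card (E r) = r.choose 2 := by
  rw [Fintype.card_congr (edgeEquiv r), Fintype.card_sigma]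
  simp only [Fintype.card_fin]
  rw [Fin.sum_univ_eq_sum_range (fun i => i) r, Finset.sum_range_id, Nat.choose_two_right]

/-- `e` is incident to vertex `i` of the tournament. -/
def inc {r : ℕ} (i : Fin r) (e : E r) : Prop := e.1.1 = i ∨ e.1.2 = i

lemma eq_of_inc_inc {r : ℕ} {i j : Fin r} {e e' : E r} (hij : i ≠ j)
    (hi : inc i e) (hj : inc j e) (hi' : inc i e') (hj' : inc j e') : e = e' := by
  have key : ∀ f : E r, inc i f → inc j f → f.1 = (i, j) ∨ f.1 = (j, i) := by
    rintro ⟨⟨a, b⟩, hab⟩ (ha | ha) (hb | hb) <;> simp_all [inc]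
  have he := e.2; have he' := e'.2
  rcases key e hi hj with h1 | h1 <;> rcases key e' hi' hj' with h2 | h2 <;>
    first
    | exact Subtype.ext (h1.trans h2.symm)
    | (exfalso; rw [h1] at he; rw [h2] at he'
       exact absurd (he.trans he') (lt_irrefl _))

def R {n r m : ℕ} (ψ : Fin n ≃ E r × Fin m) (i : Fin r) (u v : Fin n) : Prop :=
  inc i (ψ u).1 ∧ inc i (ψ v).1 ∧ ((ψ u).1 = (ψ v).1 → (ψ u).1.1.1 = i)

/-- The `i`-th graph of the construction. -/
def G {n r m : ℕ} (ψ : Fin n ≃ E r × Fin m) (i : Fin r) : SimpleGraph (Fin n) :=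
  SimpleGraph.fromRel (R ψ i)

lemma R_of_adj {n r m : ℕ} {ψ : Fin n ≃ E r × Fin m} {i : Fin r} {u v : Fin n}
    (h : (G ψ i).Adj u v) : R ψ i u v := by
  obtain ⟨-, h | h⟩ := h
  · exact h
  · obtain ⟨h1, h2, h3⟩ := h
    exact ⟨h2, h1, fun he => he ▸ h3 he.symm⟩

lemma disj {n r m : ℕ} (ψ : Fin n ≃ E r × Fin m) {i j : Fin r} (hij : i ≠ j)
    (u v : Fin n) : ¬((G ψ i).Adj u v ∧ (G ψ j).Adj u v) := by
  rintro ⟨hi, hj⟩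
  obtain ⟨hi1, hi2, hi3⟩ := R_of_adj hi
  obtain ⟨hj1, hj2, hj3⟩ := R_of_adj hj
  by_cases he : (ψ u).1 = (ψ v).1
  · exact hij ((hi3 he).symm.trans (hj3 he))
  · exact he (eq_of_inc_inc hij hi1 hj1 hi2 hj2)

/-- Constraint on the trace of a potential clique of `G i` in part `e`. -/
def P {r : ℕ} (m : ℕ) (i : Fin r) (e : E r) (s : Finset (Fin m)) : Prop :=
  (¬ inc i e → s = ∅) ∧ (e.1.2 = i → s.card ≤ 1)

/-- The count of allowed traces in part `e`. -/
def c {r : ℕ} (m : ℕ) (i : Fin r) (e : E r) : ℕ :=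
  if e.1.1 = i then 2 ^ m else if e.1.2 = i then m + 1 else 1

lemma card_le_one (m : ℕ) : Nat.card {s : Finset (Fin m) // s.card ≤ 1} = m + 1 := by
  have hb : Function.Bijective (fun o : Option (Fin m) =>
      (⟨o.elim ∅ ({·}), by cases o <;> simp⟩ : {s : Finset (Fin m) // s.card ≤ 1})) := by
    constructor
    · rintro (_|a) (_|b) h <;> simp_all [Subtype.ext_iff] <;>
        first
        | exact absurd h.symm (Finset.singleton_ne_empty b)
        | exact absurd h (Finset.singleton_ne_empty a)
        | exact Finset.singleton_injective h
    · rintro ⟨s, hs⟩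
      rcases Nat.le_one_iff_eq_zero_or_eq_one.mp hs with h | h
      · exact ⟨none, Subtype.ext (Finset.card_eq_zero.mp h).symm⟩
      · obtain ⟨a, rfl⟩ := Finset.card_eq_one.mp h
        exact ⟨some a, rfl⟩
  rw [← Nat.card_eq_of_bijective _ hb]
  simp [Nat.card_eq_fintype_card]

lemma card_P {r : ℕ} (m : ℕ) (i : Fin r) (e : E r) :
    Nat.card {s : Finset (Fin m) // P m i e s} = c m i e := by
  by_cases h1 : e.1.1 = i
  · have h2 : e.1.2 ≠ i := fun h => absurd (h1.symm ▸ h.symm ▸ e.2) (lt_irrefl _)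
    have hall : ∀ s : Finset (Fin m), P m i e s :=
      fun s => ⟨fun h => absurd (Or.inl h1) h, fun h => absurd h h2⟩
    rw [Nat.card_congr (Equiv.subtypeUnivEquiv hall), c, if_pos h1]
    simp [Nat.card_eq_fintype_card, Fintype.card_finset]
  · by_cases h2 : e.1.2 = i
    · have hiff : ∀ s : Finset (Fin m), P m i e s ↔ s.card ≤ 1 :=
        fun s => ⟨fun h => h.2 h2, fun h => ⟨fun hn => absurd (Or.inr h2) hn, fun _ => h⟩⟩
      rw [Nat.card_congr (Equiv.subtypeEquivRight hiff), card_le_one, c, if_neg h1, if_pos h2]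
    · have hiff : ∀ s : Finset (Fin m), P m i e s ↔ s = ∅ := by
        intro s
        constructor
        · intro h; exact h.1 (by simp [inc, h1, h2])
        · rintro rfl; exact ⟨fun _ => rfl, fun _ => by simp⟩
      rw [Nat.card_congr (Equiv.subtypeEquivRight hiff), c, if_neg h1, if_neg h2]
      haveI : Subsingleton {s : Finset (Fin m) // s = ∅} :=
        ⟨fun a b => Subtype.ext (a.2.trans b.2.symm)⟩
      haveI : Nonempty {s : Finset (Fin m) // s = ∅} := ⟨⟨∅, rfl⟩⟩
      exact Nat.card_unique

/-- Builds a clique of `G i` from a choice of allowed traces in all parts. -/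
def Phi {n r m : ℕ} (ψ : Fin n ≃ E r × Fin m) (i : Fin r)
    (f : ∀ e : E r, {s : Finset (Fin m) // P m i e s}) : Finset (Fin n) :=
  univ.filter (fun v => (ψ v).2 ∈ (f (ψ v).1).1)

lemma mem_Phi {n r m : ℕ} (ψ : Fin n ≃ E r × Fin m) (i : Fin r)
    (f : ∀ e : E r, {s : Finset (Fin m) // P m i e s}) (v : Fin n) :
    v ∈ Phi ψ i f ↔ (ψ v).2 ∈ (f (ψ v).1).1 := by simp [Phi]

lemma Phi_inj {n r m : ℕ} (ψ : Fin n ≃ E r × Fin m) (i : Fin r) :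
    Function.Injective (Phi ψ i) := by
  intro f g h
  funext e
  apply Subtype.ext
  ext x
  have := Finset.ext_iff.mp h (ψ.symm (e, x))
  rw [mem_Phi, mem_Phi, Equiv.apply_symm_apply] at this
  exact this

lemma Phi_clique {n r m : ℕ} (ψ : Fin n ≃ E r × Fin m) (i : Fin r)
    (f : ∀ e : E r, {s : Finset (Fin m) // P m i e s}) :
    (G ψ i).IsClique (Phi ψ i f : Set (Fin n)) := by
  intro u hu v hv huv
  rw [Finset.mem_coe, mem_Phi] at hu hv
  refine ⟨huv, Or.inl ⟨?_, ?_, ?_⟩⟩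
  · by_contra hni
    rw [(f (ψ u).1).2.1 hni] at hu
    exact absurd hu (Finset.notMem_empty _)
  · by_contra hni
    rw [(f (ψ v).1).2.1 hni] at hv
    exact absurd hv (Finset.notMem_empty _)
  · intro he
    by_contra hne
    have hinc : inc i (ψ u).1 := by
      by_contra hni
      rw [(f (ψ u).1).2.1 hni] at hu
      exact absurd hu (Finset.notMem_empty _)
    have h2 : (ψ u).1.1.2 = i := hinc.resolve_left hne
    have hv' : (ψ v).2 ∈ (f (ψ u).1).1 := by rw [he]; exact hv
    have hsnd : (ψ u).2 ≠ (ψ v).2 := by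
      intro hs
      exact huv (ψ.injective (Prod.ext he hs))
    have : 1 < ((f (ψ u).1).1).card :=
      Finset.one_lt_card.mpr ⟨_, hu, _, hv', hsnd⟩
    exact absurd ((f (ψ u).1).2.2 h2) (by omega)

lemma per_graph_bound {n r m : ℕ} (ψ : Fin n ≃ E r × Fin m) (i : Fin r) :
    ∏ e : E r, c m i e ≤ cliqueCount (G ψ i) := by
  rw [cliqueCount]
  have hinj : Function.Injective
      (fun f : (∀ e : E r, {s : Finset (Fin m) // P m i e s}) =>
        (⟨Phi ψ i f, Phi_clique ψ i f⟩ :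
          {s : Finset (Fin n) // (G ψ i).IsClique (s : Set (Fin n))})) :=
    fun f g h => Phi_inj ψ i (congrArg Subtype.val h)
  have := Nat.card_le_card_of_injective _ hinj
  rwa [Nat.card_pi, Finset.prod_congr rfl (fun e _ => card_P m i e)] at this

lemma col_prod {r : ℕ} (m : ℕ) (e : E r) : ∏ i, c m i e = 2 ^ m * (m + 1) := by
  have hne : e.1.1 ≠ e.1.2 := ne_of_lt e.2
  have hc : ∀ i, c m i e =
      (if e.1.1 = i then 2 ^ m else 1) * (if e.1.2 = i then m + 1 else 1) := by
    intro i
    unfold c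
    by_cases h1 : e.1.1 = i <;> by_cases h2 : e.1.2 = i <;> simp_all
  rw [Finset.prod_congr rfl (fun i _ => hc i), Finset.prod_mul_distrib,
    Finset.prod_ite_eq, Finset.prod_ite_eq]
  simp

end EDP

theorem exists_edge_disjoint_prod_ge (n r : ℕ) (hr : 2 ≤ r) (hdvd : Nat.choose r 2 ∣ n) :
    ∃ G : Fin r → SimpleGraph (Fin n),
      (∀ i j, i ≠ j → ∀ u v, ¬((G i).Adj u v ∧ (G j).Adj u v)) ∧
      (n / Nat.choose r 2) ^ Nat.choose r 2 * 2 ^ n ≤ ∏ i, cliqueCount (G i) := by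
  set m := n / Nat.choose r 2 with hm
  have hn : Nat.choose r 2 * m = n := Nat.mul_div_cancel' hdvd
  have hcard : Fintype.card (EDP.E r × Fin m) = n := by
    rw [Fintype.card_prod, EDP.card_E, Fintype.card_fin, hn]
  let ψ : Fin n ≃ EDP.E r × Fin m := (Fintype.equivFinOfCardEq hcard).symm
  refine ⟨EDP.G ψ, fun i j hij u v => EDP.disj ψ hij u v, ?_⟩
  calc
    m ^ Nat.choose r 2 * 2 ^ n = (m * 2 ^ m) ^ Nat.choose r 2 := by
      rw [← hn, pow_mul', mul_pow]
    _ ≤ (2 ^ m * (m + 1)) ^ Nat.choose r 2 := by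
      refine Nat.pow_le_pow_left ?_ _
      rw [mul_comm (2 ^ m)]
      exact Nat.mul_le_mul_right _ (Nat.le_succ m)
    _ = ∏ _e : EDP.E r, (2 ^ m * (m + 1)) := by
      rw [Finset.prod_const, Finset.card_univ, EDP.card_E]
    _ = ∏ e : EDP.E r, ∏ i, EDP.c m i e :=
      Finset.prod_congr rfl (fun e _ => (EDP.col_prod m e).symm)
    _ = ∏ i, ∏ e : EDP.E r, EDP.c m i e := Finset.prod_comm
    _ ≤ ∏ i, cliqueCount (EDP.G ψ i) :=
      Finset.prod_le_prod' (fun i _ => EDP.per_graph_bound ψ i)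
end
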